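/- The second homology group H₂(B₃(Θ₄)) of the unordered 3-point configuration space of the theta graph with four edges is free abelian of rank 1. -/

import Mathlib

/-!
A combinatorial model of the Świątkowski chain complex of a finite graph
(finite CW-complex of dimension ≤ 1), computing the homology of its unordered
configuration spaces (An–Drummond-Cole–Knudsen).

A graph is given by a vertex type `V`, an edge type `E` and an endpoint map
`ends : E → V × V` (self-loops and multiple edges are allowed).  A half-edge is
a pair `(e, b) : E × Bool`, whose vertex is the corresponding endpoint of `e`.

We work with the ℤ-basis of the Świątkowski complex consisting of a monomial
`m : E →₀ ℕ` in the edges together with a choice, for each vertex `v`, of a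
local generator from `S(v) = ℤ⟨∅, v, h ∈ H(v)⟩`: a half-edge at `v`
(`Sum.inl`), the vertex itself (`Sum.inr true`), or `∅` (`Sum.inr false`).
The differential is the ℤ[E]-linear derivation with `∂h = e(h) - v(h)`,
with Koszul signs determined by a fixed enumeration of the vertices.
`degB` is the homological degree (number of half-edge factors) and `wtB` is the
weight (number of particles).  `hasDW i k` is the subgroup of chains of pure
degree `i` and weight `k`; `cyc i k` the corresponding cycles, `bdry i k` the
boundaries of degree/weight `(i+1, k)` chains, and `Hgr i k` their quotient,
which is `H_i(B_k Γ)`.  `stab e` is edge stabilization (multiplication by `e`).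
-/

namespace Swiatkowski

variable {V E : Type} [Fintype V] [Fintype E] [DecidableEq V] [DecidableEq E]

/-- The vertex of a half-edge. -/
def vtx (ends : E → V × V) (h : E × Bool) : V :=
  cond h.2 (ends h.1).2 (ends h.1).1

/-- The local generators at a vertex `v`: a half-edge at `v`, or the vertex
generator (`true`), or `∅` (`false`). -/
abbrev VGen (ends : E → V × V) (v : V) : Type :=
  {h : E × Bool // vtx ends h = v} ⊕ Bool

/-- A choice of local generator at every vertex. -/
abbrev States (ends : E → V × V) : Type := ∀ v : V, VGen ends v

/-- The ℤ-basis of the Świątkowski complex: an edge monomial together with a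
state. -/
abbrev Bas (ends : E → V × V) : Type := (E →₀ ℕ) × States ends

/-- The underlying ℤ-module of the Świątkowski complex. -/
abbrev SC (ends : E → V × V) : Type := Bas ends →₀ ℤ

variable (ends : E → V × V)

/-- An enumeration of the vertices, used for Koszul signs. -/
noncomputable def idx : V → ℕ := fun v => ((Fintype.equivFin V) v : ℕ)

/-- The Koszul sign of the half-edge slot at `v` inside the state `f`. -/
noncomputable def sgn (f : States ends) (v : V) : ℤ :=
  (-1) ^ (Finset.univ.filter fun w => idx w < idx v ∧ (f w).isLeft = true).card

/-- Homological degree of a basis element: its number of half-edge factors. -/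
def degB (b : Bas ends) : ℕ :=
  (Finset.univ.filter fun v => (b.2 v).isLeft = true).card

/-- Weight (particle number) of a basis element. -/
def wtB (b : Bas ends) : ℕ :=
  (b.1.sum fun _ n => n) + ∑ v : V, Sum.elim (fun _ => 1) (fun t => cond t 1 0) (b.2 v)

/-- Value of the differential on a basis element: the signed sum over the
half-edge slots `h` of the substitutions `h ↦ e(h)` and `h ↦ v(h)`. -/
noncomputable def Db (b : Bas ends) : SC ends :=
  ∑ v : V,
    (match b.2 v with
      | Sum.inl h =>
          sgn ends b.2 v •
            (Finsupp.single (b.1 + Finsupp.single h.1.1 1,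
                Function.update b.2 v (Sum.inr false)) (1 : ℤ)
              - Finsupp.single (b.1, Function.update b.2 v (Sum.inr true)) (1 : ℤ))
      | Sum.inr _ => 0)

/-- The differential of the Świątkowski complex. -/
noncomputable def D : SC ends →ₗ[ℤ] SC ends :=
  Finsupp.linearCombination ℤ (Db ends)

/-- The subgroup of chains of pure homological degree `i` and weight `k`. -/
noncomputable def hasDW (i k : ℕ) : Submodule ℤ (SC ends) where
  carrier := {x | ∀ b ∈ x.support, degB ends b = i ∧ wtB ends b = k}
  add_mem' := by
    intro x y hx hy b hb
    rcases Finset.mem_union.mp (Finsupp.support_add hb) with h | h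
    exacts [hx b h, hy b h]
  zero_mem' := by simp
  smul_mem' := by
    intro c x hx b hb
    exact hx b (Finsupp.support_smul hb)

/-- Cycles of degree `i` and weight `k`. -/
noncomputable def cyc (i k : ℕ) : Submodule ℤ (SC ends) := LinearMap.ker (D ends) ⊓ hasDW ends i k

/-- Boundaries of degree `i` and weight `k` chains. -/
noncomputable def bdry (i k : ℕ) : Submodule ℤ (SC ends) := Submodule.map (D ends) (hasDW ends (i + 1) k)

/-- The homology `H_i(B_k Γ)` of the weight-`k` Świątkowski complex. -/
noncomputable def Hgr (i k : ℕ) :=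
  cyc ends i k ⧸ Submodule.comap (cyc ends i k).subtype (bdry ends i k)

noncomputable instance (i k : ℕ) : AddCommGroup (Hgr ends i k) :=
  inferInstanceAs (AddCommGroup
    (cyc ends i k ⧸ Submodule.comap (cyc ends i k).subtype (bdry ends i k)))

/-- Edge stabilization: multiplication by the edge `e`. -/
noncomputable def stab (e : E) : SC ends →ₗ[ℤ] SC ends :=
  Finsupp.lmapDomain ℤ ℤ fun b => (b.1 + Finsupp.single e 1, b.2)

end Swiatkowski

namespace Theta4

open Swiatkowski

/-- The theta graph `Θ₄`: two vertices (`false` and `true`) joined by four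
edges. -/
def ends : Fin 4 → Bool × Bool := fun _ => (false, true)

end Theta4

/-!
Since Θ₄ has only two vertices, the Świątkowski complex has no chains of degree 3, so
`H₂(B₃ Θ₄)` is the group of cycles of degree 2 and weight 3. These chains are the combinations
`∑ c(e, a, b) · e h_a h_b` of an edge `e`, a half-edge of `a` at one vertex and a half-edge of `b`
at the other. The boundary kills such a chain iff `c` is alternating (the term `e a h_b` of
`∂(e h_a h_b)` also occurs in `∂(a h_e h_b)`) and `∑_b c(e, a, b) = 0`.
Read as 3-forms on `ℤ⁴`, these are the forms annihilated by contraction with `(1, 1, 1, 1)`,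
which are the multiples of the contraction of `e₀ ∧ e₁ ∧ e₂ ∧ e₃`: a copy of `ℤ`.
-/

section PushCoeffs

variable {ι α : Type*} (R : Type*) [Fintype ι] [Semiring R]

noncomputable def pushCoeffs (f : ι → α) : (ι → R) →ₗ[R] α →₀ R :=
  Fintype.linearCombination R fun i => Finsupp.single (f i) 1

variable {R} [DecidableEq α]

theorem pushCoeffs_apply (f : ι → α) (c : ι → R) (t : α) :
    pushCoeffs R f c t = ∑ i ∈ Finset.univ.filter (f · = t), c i := by
  simp [pushCoeffs, Fintype.linearCombination_apply, Finsupp.finsetSum_apply,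
    Finsupp.single_apply, Finset.sum_filter]

theorem pushCoeffs_apply_eq_zero_of_notMem_range (f : ι → α) (c : ι → R) {t : α}
    (ht : t ∉ Set.range f) : pushCoeffs R f c t = 0 := by
  simp_all [pushCoeffs_apply]

theorem pushCoeffs_eq_zero_iff (f : ι → α) (c : ι → R) :
    pushCoeffs R f c = 0 ↔ ∀ j, ∑ i ∈ Finset.univ.filter (f · = f j), c i = 0 := by
  refine ⟨fun h j => by rw [← pushCoeffs_apply, h, Finsupp.zero_apply], fun h => ?_⟩
  ext t
  by_cases ht : t ∈ Set.range f
  · obtain ⟨j, rfl⟩ := ht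
    rw [pushCoeffs_apply, h j, Finsupp.zero_apply]
  · rw [pushCoeffs_apply_eq_zero_of_notMem_range f c ht, Finsupp.zero_apply]

theorem pushCoeffs_eq_zero_iff_forall_apply (f : ι → α) (c : ι → R) :
    pushCoeffs R f c = 0 ↔ ∀ j, pushCoeffs R f c (f j) = 0 := by
  simp only [pushCoeffs_eq_zero_iff, pushCoeffs_apply]

end PushCoeffs

theorem Finset.sum_pair_eq_zero_iff {ι : Type*} [DecidableEq ι] (c : ι → ℤ) (i j : ι) :
    ∑ k ∈ {i, j}, c k = 0 ↔ c j = -c i := by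
  rcases eq_or_ne i j with rfl | hij
  · rw [Finset.pair_eq_singleton, Finset.sum_singleton]
    omega
  · rw [Finset.sum_pair hij]
    omega

theorem Finsupp.exists_eq_single_of_sum_eq_one {α : Type*} [DecidableEq α] {m : α →₀ ℕ}
    (h : m.sum (fun _ n => n) = 1) : ∃ a, m = Finsupp.single a 1 := by
  obtain ⟨a, ha⟩ := Multiset.card_eq_one.mp ((Finsupp.card_toMultiset m).trans h)
  exact ⟨a, by rw [← Finsupp.toMultiset_toFinsupp m, ha, Multiset.toFinsupp_singleton]⟩

namespace Swiatkowski

variable {V E : Type} [Fintype V] (ends : E → V × V)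

theorem degB_le_card (b : Bas ends) : degB ends b ≤ Fintype.card V :=
  Finset.card_filter_le _ _

theorem sgn_congr {f g : States ends} (h : ∀ w, (f w).isLeft = (g w).isLeft) (v : V) :
    sgn ends f v = sgn ends g v := by
  simp only [sgn, h]

theorem sgn_ne_zero (f : States ends) (v : V) : sgn ends f v ≠ 0 :=
  pow_ne_zero _ (by norm_num)

theorem D_single [DecidableEq V] (b : Bas ends) : D ends (Finsupp.single b 1) = Db ends b := by
  rw [D, Finsupp.linearCombination_single, one_smul]

theorem hasDW_eq_bot_of_card_lt [DecidableEq E] {i : ℕ} (k : ℕ) (hi : Fintype.card V < i) :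
    hasDW ends i k = ⊥ := by
  refine eq_bot_iff.mpr fun x hx => (Submodule.mem_bot ℤ).mpr ?_
  by_contra hne
  obtain ⟨b, hb⟩ := Finsupp.support_nonempty_iff.mpr hne
  exact ((degB_le_card ends b).trans_lt hi).ne (hx b hb).1

variable [DecidableEq V] [DecidableEq E]

theorem bdry_eq_bot_of_card_le {i : ℕ} (k : ℕ) (hi : Fintype.card V ≤ i) :
    bdry ends i k = ⊥ := by
  rw [bdry, hasDW_eq_bot_of_card_lt ends k (Nat.lt_succ_of_le hi), Submodule.map_bot]

noncomputable def hgrEquivCycOfCardLe {i : ℕ} (k : ℕ) (hi : Fintype.card V ≤ i) :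
    Hgr ends i k ≃ₗ[ℤ] cyc ends i k :=
  Submodule.quotEquivOfEqBot _ <| by
    rw [bdry_eq_bot_of_card_le ends k hi, Submodule.comap_bot, Submodule.ker_subtype]

end Swiatkowski

namespace Theta4

open Swiatkowski Finsupp

abbrev Triple : Type := Fin 4 × Fin 4 × Fin 4

def srcHalf (a : Fin 4) : {h : Fin 4 × Bool // vtx ends h = false} := ⟨(a, false), rfl⟩

def tgtHalf (b : Fin 4) : {h : Fin 4 × Bool // vtx ends h = true} := ⟨(b, true), rfl⟩

theorem srcHalf_surjective : Function.Surjective srcHalf := by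
  rintro ⟨⟨a, _ | _⟩, hv⟩
  · exact ⟨a, rfl⟩
  · simp [vtx, ends] at hv

theorem tgtHalf_surjective : Function.Surjective tgtHalf := by
  rintro ⟨⟨b, _ | _⟩, hv⟩
  · simp [vtx, ends] at hv
  · exact ⟨b, rfl⟩

@[simp] theorem srcHalf_inj {a a' : Fin 4} : srcHalf a = srcHalf a' ↔ a = a' :=
  ⟨fun h => congrArg (·.1.1) h, congrArg _⟩

@[simp] theorem tgtHalf_inj {b b' : Fin 4} : tgtHalf b = tgtHalf b' ↔ b = b' :=
  ⟨fun h => congrArg (·.1.1) h, congrArg _⟩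

def mkState (g₀ : VGen ends false) (g₁ : VGen ends true) : States ends
  | false => g₀
  | true => g₁

theorem eq_mkState (f : States ends) : f = mkState (f false) (f true) := by
  funext v; cases v <;> rfl

@[simp] theorem mkState_inj {g₀ g₀' : VGen ends false} {g₁ g₁' : VGen ends true} :
    mkState g₀ g₁ = mkState g₀' g₁' ↔ g₀ = g₀' ∧ g₁ = g₁' :=
  ⟨fun h => ⟨congrFun h false, congrFun h true⟩, fun ⟨h₀, h₁⟩ => h₀ ▸ h₁ ▸ rfl⟩

@[simp] theorem update_mkState_false (g₀ g₀' : VGen ends false) (g₁ : VGen ends true) :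
    Function.update (mkState g₀ g₁) false g₀' = mkState g₀' g₁ := by
  funext v; cases v <;> rfl

@[simp] theorem update_mkState_true (g₀ : VGen ends false) (g₁ g₁' : VGen ends true) :
    Function.update (mkState g₀ g₁) true g₁' = mkState g₀ g₁' := by
  funext v; cases v <;> rfl

/-- `cell (e, a, b)` is the basis element `e · h_a · h_b`, where `h_a` is the half-edge of `a`
at `false` and `h_b` the half-edge of `b` at `true`. -/
noncomputable def cell (p : Triple) : Bas ends :=
  (single p.1 1, mkState (.inl (srcHalf p.2.1)) (.inl (tgtHalf p.2.2)))

theorem cell_injective : Function.Injective cell := by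
  rintro ⟨e, a, b⟩ ⟨e', a', b'⟩ h
  simp only [cell, Prod.mk.injEq, mkState_inj, Sum.inl.injEq, srcHalf_inj, tgtHalf_inj] at h
  obtain ⟨he, rfl, rfl⟩ := h
  rw [single_left_injective one_ne_zero he]

theorem degB_cell (p : Triple) : degB ends (cell p) = 2 := rfl

theorem wtB_cell (p : Triple) : wtB ends (cell p) = 3 := by
  simp [wtB, cell, mkState]

theorem exists_cell_of_degB_of_wtB {t : Bas ends} (h₂ : degB ends t = 2) (h₃ : wtB ends t = 3) :
    ∃ p, cell p = t := by
  obtain ⟨m, f⟩ := t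
  have hLeft (v : Bool) : (f v).isLeft := by
    simpa using Finset.filter_eq_self.mp (Finset.eq_univ_of_card _ h₂) v
  obtain ⟨h₀, hf₀⟩ := Sum.isLeft_iff.mp (hLeft false)
  obtain ⟨h₁, hf₁⟩ := Sum.isLeft_iff.mp (hLeft true)
  have hm : m.sum (fun _ n => n) = 1 := by simpa [wtB, hf₀, hf₁] using h₃
  obtain ⟨e, rfl⟩ := exists_eq_single_of_sum_eq_one hm
  obtain ⟨a, rfl⟩ := srcHalf_surjective h₀
  obtain ⟨b, rfl⟩ := tgtHalf_surjective h₁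
  exact ⟨(e, a, b), by rw [eq_mkState f, hf₀, hf₁]; rfl⟩

noncomputable def chain : (Triple → ℤ) →ₗ[ℤ] SC ends := pushCoeffs ℤ cell

theorem chain_apply_cell (c : Triple → ℤ) (q : Triple) : chain c (cell q) = c q := by
  simp [chain, pushCoeffs_apply, cell_injective.eq_iff, Finset.filter_eq']

theorem chain_injective : Function.Injective chain := fun c c' h =>
  funext fun q => by rw [← chain_apply_cell c q, h, chain_apply_cell]

theorem range_chain : LinearMap.range chain = hasDW ends 2 3 := by
  refine le_antisymm ?_ fun x hx => ⟨fun p => x (cell p), ?_⟩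
  · rintro _ ⟨c, rfl⟩ t ht
    obtain ⟨p, rfl⟩ : t ∈ Set.range cell := by
      by_contra h
      exact mem_support_iff.mp ht (pushCoeffs_apply_eq_zero_of_notMem_range _ c h)
    exact ⟨degB_cell p, wtB_cell p⟩
  · ext t
    by_cases ht : t ∈ Set.range cell
    · obtain ⟨p, rfl⟩ := ht
      exact chain_apply_cell _ p
    · have hxt : x t = 0 := by
        by_contra hne
        obtain ⟨h₂, h₃⟩ := hx t (mem_support_iff.mpr hne)
        exact ht (exists_cell_of_degB_of_wtB h₂ h₃)
      rw [hxt]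
      exact pushCoeffs_apply_eq_zero_of_notMem_range _ _ ht

noncomputable def edgeFaceSrc (p : Triple) : Bas ends :=
  (single p.1 1 + single p.2.1 1, mkState (.inr false) (.inl (tgtHalf p.2.2)))

noncomputable def vertexFaceSrc (p : Triple) : Bas ends :=
  (single p.1 1, mkState (.inr true) (.inl (tgtHalf p.2.2)))

noncomputable def edgeFaceTgt (p : Triple) : Bas ends :=
  (single p.1 1 + single p.2.2 1, mkState (.inl (srcHalf p.2.1)) (.inr false))

noncomputable def vertexFaceTgt (p : Triple) : Bas ends :=
  (single p.1 1, mkState (.inl (srcHalf p.2.1)) (.inr true))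

noncomputable def cellSign (v : Bool) : ℤ := sgn ends (cell 0).2 v

theorem sgn_cell (p : Triple) (v : Bool) : sgn ends (cell p).2 v = cellSign v :=
  sgn_congr ends (fun w => by cases w <;> rfl) v

theorem Db_cell (p : Triple) :
    Db ends (cell p) =
      cellSign true • (single (edgeFaceTgt p) 1 - single (vertexFaceTgt p) 1) +
        cellSign false • (single (edgeFaceSrc p) 1 - single (vertexFaceSrc p) 1) := by
  rw [← sgn_cell p true, ← sgn_cell p false]
  simp only [Db, Fintype.sum_bool, cell, update_mkState_true, update_mkState_false]
  rfl

theorem D_chain (c : Triple → ℤ) :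
    D ends (chain c) =
      cellSign true • (pushCoeffs ℤ edgeFaceTgt c - pushCoeffs ℤ vertexFaceTgt c) +
        cellSign false • (pushCoeffs ℤ edgeFaceSrc c - pushCoeffs ℤ vertexFaceSrc c) := by
  simp only [chain, pushCoeffs, Fintype.linearCombination_apply, map_sum, map_smul, D_single,
    Db_cell, smul_add, smul_sub, Finset.sum_add_distrib, Finset.sum_sub_distrib, Finset.smul_sum,
    smul_comm (c _) (cellSign _)]

theorem D_chain_eq_zero_iff_pushCoeffs (c : Triple → ℤ) :
    D ends (chain c) = 0 ↔
      pushCoeffs ℤ edgeFaceSrc c = 0 ∧ pushCoeffs ℤ vertexFaceSrc c = 0 ∧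
        pushCoeffs ℤ edgeFaceTgt c = 0 ∧ pushCoeffs ℤ vertexFaceTgt c = 0 := by
  refine ⟨fun h => ?_, fun ⟨h₁, h₂, h₃, h₄⟩ => by simp [D_chain, h₁, h₂, h₃, h₄]⟩
  have hD (t : Bas ends) : D ends (chain c) t = 0 := by rw [h, Finsupp.zero_apply]
  simp only [pushCoeffs_eq_zero_iff_forall_apply]
  -- the four faces have pairwise different states, so `D (chain c)` at a face of one kind only
  -- sees the faces of that kind
  refine ⟨fun j => ?_, fun j => ?_, fun j => ?_, fun j => ?_⟩ <;>
    [have := hD (edgeFaceSrc j); have := hD (vertexFaceSrc j);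
      have := hD (edgeFaceTgt j); have := hD (vertexFaceTgt j)] <;>
    simpa [D_chain, pushCoeffs_apply, edgeFaceSrc, edgeFaceTgt, vertexFaceSrc, vertexFaceTgt,
      cellSign, sgn_ne_zero] using this

theorem filter_edgeFaceSrc_eq (q : Triple) :
    Finset.univ.filter (edgeFaceSrc · = edgeFaceSrc q) = {q, (q.2.1, q.1, q.2.2)} := by
  ext ⟨e, a, b⟩
  simp [edgeFaceSrc, single_add_single_eq_single_add_single, Prod.ext_iff]
  tauto

theorem filter_edgeFaceTgt_eq (q : Triple) :
    Finset.univ.filter (edgeFaceTgt · = edgeFaceTgt q) = {q, (q.2.2, q.2.1, q.1)} := by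
  ext ⟨e, a, b⟩
  simp [edgeFaceTgt, single_add_single_eq_single_add_single, Prod.ext_iff]
  tauto

theorem sum_filter_vertexFaceSrc_eq (c : Triple → ℤ) (q : Triple) :
    ∑ p ∈ Finset.univ.filter (vertexFaceSrc · = vertexFaceSrc q), c p =
      ∑ a, c (q.1, a, q.2.2) := by
  simp [vertexFaceSrc, Finset.sum_filter, Fintype.sum_prod_type, ite_and,
    single_left_inj one_ne_zero]

theorem sum_filter_vertexFaceTgt_eq (c : Triple → ℤ) (q : Triple) :
    ∑ p ∈ Finset.univ.filter (vertexFaceTgt · = vertexFaceTgt q), c p =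
      ∑ b, c (q.1, q.2.1, b) := by
  simp only [vertexFaceTgt, Prod.mk.injEq, single_left_inj one_ne_zero, mkState_inj,
    Sum.inl.injEq, srcHalf_inj, and_true, Finset.sum_filter, ite_and, Fintype.sum_prod_type,
    Finset.sum_ite_irrel, Finset.sum_const_zero, Finset.sum_ite_eq', Finset.mem_univ, if_true]
  rw [Finset.sum_comm]
  simp

theorem D_chain_eq_zero_iff (c : Triple → ℤ) :
    D ends (chain c) = 0 ↔
      (∀ e a b, c (a, e, b) = -c (e, a, b)) ∧ (∀ e b, ∑ a, c (e, a, b) = 0) ∧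
        (∀ e a b, c (b, a, e) = -c (e, a, b)) ∧ (∀ e a, ∑ b, c (e, a, b) = 0) := by
  simp only [D_chain_eq_zero_iff_pushCoeffs, pushCoeffs_eq_zero_iff, filter_edgeFaceSrc_eq,
    filter_edgeFaceTgt_eq, sum_filter_vertexFaceSrc_eq, sum_filter_vertexFaceTgt_eq,
    Finset.sum_pair_eq_zero_iff, Prod.forall, forall_const]

/-- Up to sign, the contraction of `e₀ ∧ e₁ ∧ e₂ ∧ e₃` with `(1, 1, 1, 1)`: the sign of the
permutation sorting `(e, a, b)`, times `-(-1) ^ k` for the index `k` missing from `{e, a, b}`. -/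
def genCoeff (p : Triple) : ℤ :=
  Int.sign (((p.2.1 : ℤ) - p.1) * ((p.2.2 : ℤ) - p.1) * ((p.2.2 : ℤ) - p.2.1)) *
    (-1) ^ ((p.1 : ℕ) + p.2.1 + p.2.2 + 1)

theorem genCoeff_012 : genCoeff (0, 1, 2) = 1 := by decide

theorem D_chain_genCoeff : D ends (chain genCoeff) = 0 := by
  rw [D_chain_eq_zero_iff]
  simp only [Fin.sum_univ_four]
  decide

theorem eq_zero_of_alternating_of_sum_eq_zero (c : Triple → ℤ)
    (h12 : ∀ e a b, c (a, e, b) = -c (e, a, b)) (h13 : ∀ e a b, c (b, a, e) = -c (e, a, b))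
    (hsum : ∀ e a, ∑ b, c (e, a, b) = 0) (h012 : c (0, 1, 2) = 0) : c = 0 := by
  have h23 (e a b) : c (e, b, a) = -c (e, a, b) := by
    linarith [h12 b e a, h13 b e a, h12 e a b]
  have hdiag12 (e b) : c (e, e, b) = 0 := by linarith [h12 e e b]
  have hdiag13 (e a) : c (e, a, e) = 0 := by linarith [h13 e a e]
  have hdiag23 (e a) : c (e, a, a) = 0 := by linarith [h23 e a a]
  have hsum' (e a) := (Fin.sum_univ_four fun b => c (e, a, b)).symm.trans (hsum e a)
  -- `c` is determined by its values on the four 3-subsets of `Fin 4`, and the sum over the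
  -- row `(e, a)` links the two 3-subsets containing `e` and `a`
  have h013 : c (0, 1, 3) = 0 := by linarith [hsum' 0 1, hdiag13 0 1, hdiag23 0 1]
  have h023 : c (0, 2, 3) = 0 := by linarith [hsum' 0 2, hdiag13 0 2, hdiag23 0 2, h23 0 1 2]
  have h123 : c (1, 2, 3) = 0 := by
    linarith [hsum' 1 2, hdiag13 1 2, hdiag23 1 2, h12 0 1 2, h23 1 0 2]
  ext ⟨e, a, b⟩
  have := h12 e a b; have := h23 e a b; have := h23 a e b; have := h12 e b a; have := h12 a b e
  have := hdiag12 e b; have := hdiag13 e a; have := hdiag23 e a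
  fin_cases e <;> fin_cases a <;> fin_cases b <;>
    simp only [Fin.zero_eta, Fin.mk_one, Fin.isValue, Fin.reduceFinMk, Pi.zero_apply] at * <;>
    omega

theorem ker_D_comp_chain_eq_span : LinearMap.ker (D ends ∘ₗ chain) = ℤ ∙ genCoeff := by
  refine le_antisymm (fun c hc => ?_)
    ((Submodule.span_singleton_le_iff_mem _ _).2 D_chain_genCoeff)
  rw [LinearMap.mem_ker, LinearMap.comp_apply] at hc
  set d := c - c (0, 1, 2) • genCoeff
  have hd : D ends (chain d) = 0 := by
    simp only [d, map_sub, map_smul, hc, D_chain_genCoeff, smul_zero, sub_zero]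
  obtain ⟨h12, -, h13, hsum⟩ := (D_chain_eq_zero_iff d).1 hd
  have : d = 0 :=
    eq_zero_of_alternating_of_sum_eq_zero d h12 h13 hsum (by simp [d, genCoeff_012])
  exact Submodule.mem_span_singleton.2 ⟨c (0, 1, 2), (sub_eq_zero.1 this).symm⟩

theorem cyc_eq_map_chain : cyc ends 2 3 = (LinearMap.ker (D ends ∘ₗ chain)).map chain := by
  rw [LinearMap.ker_comp, Submodule.map_comap_eq, range_chain, cyc, inf_comm]

/-- The second homology `H₂(B₃(Θ₄))` of the unordered 3-point
configuration space of the theta graph with four edges — computed, via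
An–Drummond-Cole–Knudsen/Abrams, as the homology of the Świątkowski complex of
`Θ₄` in homological degree 2 and weight 3 — is free abelian of rank 1,
i.e. isomorphic to `ℤ`. -/
theorem H2_B3_theta4_free_rank_one : Nonempty (Hgr ends 2 3 ≃+ ℤ) := by
  have genCoeff_ne_zero : genCoeff ≠ 0 := fun h => by simpa [h] using genCoeff_012
  exact ⟨(hgrEquivCycOfCardLe ends 3 le_rfl
    |>.trans (LinearEquiv.ofEq _ _ cyc_eq_map_chain)
    |>.trans (Submodule.equivMapOfInjective _ chain_injective _).symm
    |>.trans (LinearEquiv.ofEq _ _ ker_D_comp_chain_eq_span)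
    |>.trans (LinearEquiv.toSpanNonzeroSingleton ℤ _ _ genCoeff_ne_zero).symm).toAddEquiv⟩

end Theta4
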